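/- Downward closure property of IEU (per-sequence, I-extension after I-extension): suppose S = α⊕i and S' = S⊕i', with i lexicographically before i' in each itemset. Then for every q-sequence Q containing S', IEU(S',Q) ≤ IEU(S,Q). -/

import Mathlib

open scoped Classical

/-- A sequence: a finite list of itemsets (finite sets of items). -/
abbrev PatSeq := List (Finset ℕ)

/-- `S` is a contiguous sub-sequence of `S'`: there is a contiguous block `T`
of `S'` such that each itemset of `S` is a subset of the corresponding itemset of `T`. -/
def CSub (S S' : PatSeq) : Prop :=
  ∃ T : PatSeq, List.Forall₂ (· ⊆ ·) S T ∧ T <:+: S'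

/-- `Q` has an instance of `S` at ending position `p`
(0-indexed index of the last itemset of the instance). -/
def Inst (Q S : PatSeq) (p : ℕ) : Prop :=
  S.length ≤ p + 1 ∧ p < Q.length ∧
    ∀ j < S.length, S.getD j ∅ ⊆ Q.getD (p + 1 - S.length + j) ∅

/-- `Q` contains `S`: it has at least one instance of `S`. -/
def Contains (Q S : PatSeq) : Prop := ∃ p, Inst Q S p

/-- Utility of the instance of `S` ending at position `p`, where `w j i` is the
(nonnegative) utility of item `i` in the `j`-th q-itemset. -/
def instUtil (w : ℕ → ℕ → ℕ) (S : PatSeq) (p : ℕ) : ℕ :=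
  ∑ j ∈ Finset.range S.length, ∑ i ∈ S.getD j ∅, w (p + 1 - S.length + j) i

/-- Total utility of the q-sequence `Q`. -/
def qUtil (w : ℕ → ℕ → ℕ) (Q : PatSeq) : ℕ :=
  ∑ j ∈ Finset.range Q.length, ∑ i ∈ Q.getD j ∅, w j i

/-- Utility of `S` in `Q`: the maximum instance utility over all ending positions. -/
noncomputable def seqUtil (w : ℕ → ℕ → ℕ) (Q S : PatSeq) : ℕ :=
  ((Finset.range Q.length).filter (fun p => Inst Q S p)).sup (fun p => instUtil w S p)

/-- I-extension: append item `i` to the last itemset of `α`. -/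
def IExt (α : PatSeq) (i : ℕ) : PatSeq := α.dropLast ++ [insert i (α.getLastD ∅)]

/-- S-extension: append the new itemset `{i}` to `α`. -/
def SExt (α : PatSeq) (i : ℕ) : PatSeq := α ++ [({i} : Finset ℕ)]

/-- Remaining utility of `Q` after the occurrence of item `i` in the `p`-th itemset:
utilities of items after `i` in the `p`-th itemset plus all later itemsets. -/
def ru (w : ℕ → ℕ → ℕ) (Q : PatSeq) (i p : ℕ) : ℕ :=
  (∑ x ∈ (Q.getD p ∅).filter (fun x => i < x), w p x)
    + ∑ j ∈ Finset.Ico (p + 1) Q.length, ∑ x ∈ Q.getD j ∅, w j x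

/-- IEU of the I-extension `α ⊕ i` in `Q`. -/
noncomputable def IEUI (w : ℕ → ℕ → ℕ) (Q α : PatSeq) (i : ℕ) : ℕ :=
  ((Finset.range Q.length).filter (fun p => Inst Q α p ∧ i ∈ Q.getD p ∅)).sup
    (fun p => instUtil w α p + w p i + ru w Q i p)

/-!
An instance of `α ⊕ i` ending at `p` is exactly an instance of `α` ending at `p` whose `p`-th
itemset contains `i`, and its utility exceeds that of the `α`-instance by at most `u(i, p)`.
Since `i < i'`, the item `i'` and everything after it in the `p`-th itemset lie after `i`, so
`u(i', p) + ru(Q/(i', p)) ≤ ru(Q/(i, p))`; hence every term of the maximum defining the left side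
is dominated by a term of the maximum defining the right side.
-/

theorem Finset.sum_insert_le_add {ι M : Type*} [DecidableEq ι] [AddCommMonoid M] [PartialOrder M]
    [CanonicallyOrderedAdd M] (s : Finset ι) (a : ι) (f : ι → M) :
    ∑ x ∈ insert a s, f x ≤ f a + ∑ x ∈ s, f x := by
  by_cases ha : a ∈ s
  · rw [Finset.insert_eq_of_mem ha]
    exact le_add_self
  · rw [Finset.sum_insert ha]

lemma List.getD_concat_length {α : Type*} (L : List α) (a d : α) :
    (L ++ [a]).getD L.length d = a := by
  simp

lemma iExt_append_singleton (L : PatSeq) (s : Finset ℕ) (i : ℕ) :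
    IExt (L ++ [s]) i = L ++ [insert i s] := by
  simp [IExt]

lemma iExt_nil (i : ℕ) : IExt [] i = [] ++ [insert i ∅] := rfl

lemma inst_append_singleton_iff (Q L : PatSeq) (s : Finset ℕ) (p : ℕ) :
    Inst Q (L ++ [s]) p ↔ L.length ≤ p ∧ p < Q.length ∧
      (∀ j < L.length, L.getD j ∅ ⊆ Q.getD (p - L.length + j) ∅) ∧ s ⊆ Q.getD p ∅ := by
  simp only [Inst, List.length_append, List.length_singleton, Nat.forall_lt_succ_right,
    Nat.add_sub_add_right, Nat.add_le_add_iff_right, List.getD_concat_length]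
  refine and_congr_right fun hp => and_congr_right fun _ => and_congr ?_ ?_
  · exact forall₂_congr fun j hj => by rw [List.getD_append _ _ _ _ hj]
  · rw [Nat.sub_add_cancel hp]

lemma inst_iExt_iff (Q α : PatSeq) (i p : ℕ) :
    Inst Q (IExt α i) p ↔ Inst Q α p ∧ i ∈ Q.getD p ∅ := by
  rcases α.eq_nil_or_concat' with rfl | ⟨L, s, rfl⟩
  · rw [iExt_nil, inst_append_singleton_iff]
    simp [Inst]
  · rw [iExt_append_singleton, inst_append_singleton_iff, inst_append_singleton_iff,
      Finset.insert_subset_iff]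
    tauto

lemma instUtil_append_singleton (w : ℕ → ℕ → ℕ) (L : PatSeq) (s : Finset ℕ) {p : ℕ}
    (hp : L.length ≤ p) :
    instUtil w (L ++ [s]) p =
      ∑ j ∈ Finset.range L.length, ∑ x ∈ L.getD j ∅, w (p - L.length + j) x
        + ∑ x ∈ s, w p x := by
  rw [instUtil, List.length_append, List.length_singleton, Finset.sum_range_succ,
    Nat.add_sub_add_right, List.getD_concat_length, Nat.sub_add_cancel hp]
  congr 1
  exact Finset.sum_congr rfl fun j hj => by rw [List.getD_append _ _ _ _ (Finset.mem_range.1 hj)]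

lemma instUtil_iExt_le (w : ℕ → ℕ → ℕ) (α : PatSeq) (i : ℕ) {p : ℕ}
    (hp : α.length ≤ p + 1) :
    instUtil w (IExt α i) p ≤ instUtil w α p + w p i := by
  rcases α.eq_nil_or_concat' with rfl | ⟨L, s, rfl⟩
  · rw [iExt_nil, instUtil_append_singleton w [] _ p.zero_le]
    simp [instUtil]
  · simp only [List.length_append, List.length_singleton, add_le_add_iff_right] at hp
    rw [iExt_append_singleton, instUtil_append_singleton w L _ hp,
      instUtil_append_singleton w L _ hp, add_assoc, add_comm _ (w p i)]
    gcongr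
    exact Finset.sum_insert_le_add s i (w p)

lemma add_ru_le_ru (w : ℕ → ℕ → ℕ) (Q : PatSeq) {i i' p : ℕ} (hii' : i < i')
    (hi' : i' ∈ Q.getD p ∅) :
    w p i' + ru w Q i' p ≤ ru w Q i p := by
  have hsub : insert i' ((Q.getD p ∅).filter (i' < ·)) ⊆ (Q.getD p ∅).filter (i < ·) := by
    intro x hx
    simp only [Finset.mem_insert, Finset.mem_filter] at hx ⊢
    rcases hx with rfl | ⟨hxQ, hx⟩
    · exact ⟨hi', hii'⟩
    · exact ⟨hxQ, hii'.trans hx⟩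
  have hfilter := Finset.sum_le_sum_of_subset (f := w p) hsub
  rw [Finset.sum_insert (by simp)] at hfilter
  unfold ru
  omega

theorem ieu_downward_iext_general (w : ℕ → ℕ → ℕ) (Q α : PatSeq) (i i' : ℕ)
    (hii' : i < i') :
    IEUI w Q (IExt α i) i' ≤ IEUI w Q α i := by
  refine Finset.sup_le fun p hp => ?_
  simp only [Finset.mem_filter, Finset.mem_range, inst_iExt_iff] at hp
  obtain ⟨hpQ, ⟨hinst, hiQ⟩, hi'Q⟩ := hp
  calc instUtil w (IExt α i) p + w p i' + ru w Q i' p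
      ≤ instUtil w α p + w p i + ru w Q i p := by
        have := instUtil_iExt_le w α i hinst.1
        have := add_ru_le_ru w Q hii' hi'Q
        omega
    _ ≤ IEUI w Q α i :=
        Finset.le_sup (f := fun p => instUtil w α p + w p i + ru w Q i p)
          (Finset.mem_filter.2 ⟨Finset.mem_range.2 hpQ, hinst, hiQ⟩)

/-- Downward closure property of IEU (per-sequence, I-extension after I-extension):
for `S = α ⊕ i` and `S' = S ⊕ i'` with `i` before `i'`,
`IEU(S',Q) ≤ IEU(S,Q)` for every `Q` containing `S'`. -/
theorem ieu_downward_iext (w : ℕ → ℕ → ℕ) (Q α : PatSeq) (i i' : ℕ)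
    (hα : α ≠ []) (hi : i ∉ α.getLastD ∅) (hii' : i < i')
    (hc : Contains Q (IExt (IExt α i) i')) :
    IEUI w Q (IExt α i) i' ≤ IEUI w Q α i :=
  ieu_downward_iext_general w Q α i i' hii'
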